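/- arXiv:2005.09499 — 2 statements merged into one kernel-verified Lean document; each statement's English description precedes it below -/
import Mathlib

section
/- Let g : [0,∞) → ℂ be bounded and continuous, and suppose its Laplace transform G(λ) = ∫_0^∞ e^{-λt} g(t) dt vanishes for all λ with Re λ > 0. Then g ≡ 0; in particular g(0) = 0. -/
/-!
Damping by `e^{-t}` turns `g` into an integrable function `f = 𝟙_{[0,∞)} e^{-t} g`
whose Fourier transform at `ξ` is the Laplace transform of `g` at `1 + 2πiξ`, hence zero.
Fourier inversion then gives `f = 0` at every continuity point of `f`, i.e. on `(0,∞)`,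
and continuity of `g` extends this to `t = 0`.
-/

open MeasureTheory
open scoped FourierTransform

theorem MeasureTheory.Integrable.eq_zero_of_fourier_eq_zero {V E : Type*}
    [NormedAddCommGroup V] [InnerProductSpace ℝ V] [MeasurableSpace V] [BorelSpace V]
    [FiniteDimensional ℝ V] [NormedAddCommGroup E] [NormedSpace ℂ E] [CompleteSpace E]
    {f : V → E} (hf : Integrable f) (hf₀ : 𝓕 f = 0) {v : V} (hv : ContinuousAt f v) :
    f v = 0 := by
  have h𝓕f : Integrable (𝓕 f) := by rw [hf₀]; exact integrable_zero _ _ _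
  rw [← hf.fourierInv_fourier_eq h𝓕f hv, hf₀, Real.fourierInv_eq]
  simp

theorem integrableOn_cexp_neg_mul_of_norm_le {g : ℝ → ℂ} {C : ℝ} {l : ℂ} (hl : 0 < l.re)
    (hgm : AEStronglyMeasurable g (volume.restrict (Set.Ici 0)))
    (hgb : ∀ t : ℝ, 0 ≤ t → ‖g t‖ ≤ C) :
    IntegrableOn (fun t : ℝ => Complex.exp (-l * t) * g t) (Set.Ici 0) := by
  have hexp : IntegrableOn (fun t : ℝ => C * Real.exp (-l.re * t)) (Set.Ici 0) := by
    rw [integrableOn_Ici_iff_integrableOn_Ioi]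
    exact (exp_neg_integrableOn_Ioi 0 hl).const_mul C
  refine hexp.mono' (by fun_prop) ((ae_restrict_iff' measurableSet_Ici).2 (.of_forall ?_))
  intro t ht
  rw [norm_mul, Complex.norm_exp, mul_comm]
  simpa using mul_le_mul_of_nonneg_right (hgb t ht) (Real.exp_pos _).le

theorem fourier_indicator_Ici_cexp_neg_mul (g : ℝ → ℂ) (l : ℂ) (ξ : ℝ) :
    𝓕 ((Set.Ici 0).indicator fun t : ℝ => Complex.exp (-l * t) * g t) ξ =
      ∫ t in Set.Ioi (0:ℝ), Complex.exp (-(l + 2 * Real.pi * ξ * Complex.I) * t) * g t := by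
  rw [Real.fourier_real_eq_integral_exp_smul, ← integral_Ici_eq_integral_Ioi,
    ← integral_indicator measurableSet_Ici]
  congr 1
  ext t
  by_cases ht : t ∈ Set.Ici (0:ℝ)
  · simp only [Set.indicator_of_mem ht, smul_eq_mul, ← mul_assoc, ← Complex.exp_add]
    push_cast
    ring_nf
  · simp [Set.indicator_of_notMem ht]

/-- Injectivity of the Laplace transform on bounded continuous functions on `[0,∞)`:
if all Laplace transforms vanish on the right half-plane then the function is zero. -/
theorem stmt1 (g : ℝ → ℂ) (C : ℝ)
    (hgc : ContinuousOn g (Set.Ici 0))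
    (hgb : ∀ t : ℝ, 0 ≤ t → ‖g t‖ ≤ C)
    (hG : ∀ l : ℂ, 0 < l.re →
      (∫ t in Set.Ioi (0:ℝ), Complex.exp (-l * t) * g t) = 0) :
    (∀ t : ℝ, 0 ≤ t → g t = 0) ∧ g 0 = 0 := by
  set f := (Set.Ici 0).indicator fun t : ℝ => Complex.exp (-1 * t) * g t
  have hf : Integrable f := (integrable_indicator_iff measurableSet_Ici).2 <|
    integrableOn_cexp_neg_mul_of_norm_le (by simp) (hgc.aestronglyMeasurable measurableSet_Ici) hgb
  have hf₀ : 𝓕 f = 0 := funext fun ξ =>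
    (fourier_indicator_Ici_cexp_neg_mul g 1 ξ).trans (hG _ (by simp))
  have hpos : Set.EqOn g 0 (Set.Ioi 0) := fun t ht => by
    have ht_frontier : t ∉ frontier (Set.Ici 0) := by
      simpa [frontier_Ici] using (Set.mem_Ioi.1 ht).ne'
    have hft : ContinuousAt f t :=
      (((Continuous.continuousOn (by fun_prop)).mul hgc).mono
        interior_subset).continuousAt_indicator ht_frontier
    simpa [f, (Set.mem_Ioi.1 ht).le] using hf.eq_zero_of_fourier_eq_zero hf₀ hft
  have hnonneg : Set.EqOn g 0 (Set.Ici 0) :=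
    hpos.of_subset_closure hgc continuousOn_const Set.Ioi_subset_Ici_self (closure_Ioi 0).ge
  exact ⟨fun t ht => hnonneg ht, hnonneg Set.self_mem_Ici⟩
end

section
/- Let X be a separable Hilbert space, A the generator of a strongly continuous semigroup e^{tA} on X, and Q ∈ L(X) self-adjoint nonnegative. Suppose Q_∞ x = ∫_0^∞ e^{sA} Q e^{sA*} x ds converges for all x ∈ X and defines a bounded operator mapping D(A*) into D(A). Then Q_∞ satisfies the Lyapunov equation Q_∞ A* x + A Q_∞ x = -Q x for every x ∈ D(A*). -/
/-!
Put `F t = e^{tA} Q_∞ e^{tA*} x` for `x ∈ D(A*)` and compute its right derivative at `0` in two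
ways. Since `‖e^{tA}‖` is bounded near `0` (Banach–Steinhaus), the product rule applies and gives
`Q_∞ A* x + A Q_∞ x`. On the other hand the semigroup law shifts the integral defining `Q_∞`, so
`F t = Q_∞ x - ∫_0^t e^{sA} Q e^{sA*} x ds`, whose right derivative at `0` is `-Q x` by the
fundamental theorem of calculus: the integrand is right-continuous at `0` because `e^{sA*} x` is
differentiable there.
-/

open MeasureTheory Filter Topology Set ContinuousLinearMap
open scoped RealInnerProductSpace

section OperatorFamily

variable {𝕜 E F : Type*} [NontriviallyNormedField 𝕜] [NormedAddCommGroup E] [NormedSpace 𝕜 E]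
  [NormedAddCommGroup F] [NormedSpace 𝕜 F]

theorem exists_eventually_opNorm_le_of_continuous_apply {α : Type*} [TopologicalSpace α]
    [WeaklyLocallyCompactSpace α] [CompleteSpace E] {S : α → E →L[𝕜] F}
    (hS : ∀ x, Continuous fun t => S t x) (t₀ : α) : ∃ C, ∀ᶠ t in 𝓝 t₀, ‖S t‖ ≤ C := by
  obtain ⟨K, hK, hKt₀⟩ := exists_compact_mem_nhds t₀
  obtain ⟨C, hC⟩ := banach_steinhaus (g := fun t : K => S t) fun x =>
    (hK.exists_bound_of_continuousOn (hS x).continuousOn).imp fun _ hC t => hC t t.2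
  exact ⟨C, eventually_of_mem hKt₀ fun t ht => hC ⟨t, ht⟩⟩

theorem tendsto_apply_of_eventually_opNorm_le {α : Type*} {l : Filter α} {S : α → E →L[𝕜] F}
    {C : ℝ} (hC : ∀ᶠ t in l, ‖S t‖ ≤ C) {v : α → E} {w : E} {y : F} (hv : Tendsto v l (𝓝 w))
    (hS : Tendsto (fun t => S t w) l (𝓝 y)) : Tendsto (fun t => S t (v t)) l (𝓝 y) := by
  have hbound : ∀ᶠ t in l, ‖S t (v t - w)‖ ≤ C * ‖v t - w‖ :=
    hC.mono fun t ht => (S t).le_of_opNorm_le ht _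
  have hsmall : Tendsto (fun t => C * ‖v t - w‖) l (𝓝 0) := by
    simpa using (tendsto_iff_norm_sub_tendsto_zero.mp hv).const_mul C
  simpa using (squeeze_zero_norm' hbound hsmall).add hS

theorem hasDerivWithinAt_apply_of_eventually_opNorm_le {S : 𝕜 → E →L[𝕜] F} {g : 𝕜 → E}
    {g' : E} {y : F} {s : Set 𝕜} {t₀ : 𝕜} {C : ℝ} (hC : ∀ᶠ t in 𝓝[s] t₀, ‖S t‖ ≤ C)
    (hS' : ContinuousWithinAt (fun t => S t g') s t₀) (hg : HasDerivWithinAt g g' s t₀)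
    (hS : HasDerivWithinAt (fun t => S t (g t₀)) y s t₀) :
    HasDerivWithinAt (fun t => S t (g t)) (S t₀ g' + y) s t₀ := by
  rw [hasDerivWithinAt_iff_tendsto_slope] at hg hS ⊢
  have hslope : ∀ t, slope (fun t => S t (g t)) t₀ t
      = S t (slope g t₀ t) + slope (fun t => S t (g t₀)) t₀ t := by
    intro t
    rw [slope_def_module, slope_def_module, slope_def_module, map_smul, map_sub, ← smul_add,
      sub_add_sub_cancel]
  have hmono : 𝓝[s \ {t₀}] t₀ ≤ 𝓝[s] t₀ := nhdsWithin_mono _ sdiff_subset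
  exact ((tendsto_apply_of_eventually_opNorm_le (hC.filter_mono hmono) hg
    (hS'.mono_left hmono)).add hS).congr fun t => (hslope t).symm

end OperatorFamily

theorem setIntegral_Ioi_comp_add_right {E : Type*} [NormedAddCommGroup E] [NormedSpace ℝ E]
    (f : ℝ → E) (a t : ℝ) : ∫ s in Ioi a, f (s + t) = ∫ s in Ioi (a + t), f s := by
  have := (measurePreserving_add_right volume t).setIntegral_preimage_emb
    (measurableEmbedding_addRight t) f (Ioi (a + t))
  rwa [preimage_add_const_Ioi, add_sub_cancel_right] at this

section Semigroup

variable {X : Type*} [NormedAddCommGroup X] [InnerProductSpace ℝ X] [CompleteSpace X]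
  {S : ℝ → X →L[ℝ] X}

theorem semigroup_conj_eq_sub_integral
    (hSsem : ∀ t s : ℝ, 0 ≤ t → 0 ≤ s → S (t + s) = (S t).comp (S s)) {Q Qinf : X →L[ℝ] X}
    (hint : ∀ x : X, IntegrableOn (fun s => S s (Q (adjoint (S s) x))) (Ioi 0))
    (hQinf : ∀ x : X, Qinf x = ∫ s in Ioi (0:ℝ), S s (Q (adjoint (S s) x)))
    {t : ℝ} (ht : 0 ≤ t) (x : X) :
    S t (Qinf (adjoint (S t) x)) = Qinf x - ∫ s in (0:ℝ)..t, S s (Q (adjoint (S s) x)) := by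
  set f : ℝ → X := fun s => S s (Q (adjoint (S s) x))
  have hshift : ∀ s ∈ Ioi (0:ℝ), S t (S s (Q (adjoint (S s) (adjoint (S t) x)))) = f (s + t) := by
    intro s hs
    simp only [f, add_comm s t, hSsem t s ht hs.le, adjoint_comp, comp_apply]
  have hsplit : Qinf x = (∫ s in (0:ℝ)..t, f s) + ∫ s in Ioi t, f s := by
    rw [hQinf, intervalIntegral.integral_of_le ht, ← Ioc_union_Ioi_eq_Ioi ht]
    exact setIntegral_union (Ioc_disjoint_Ioi le_rfl) measurableSet_Ioi
      ((hint x).mono_set Ioc_subset_Ioi_self) ((hint x).mono_set (Ioi_subset_Ioi ht))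
  calc S t (Qinf (adjoint (S t) x))
      = ∫ s in Ioi (0:ℝ), S t (S s (Q (adjoint (S s) (adjoint (S t) x)))) := by
        rw [hQinf, (S t).integral_comp_comm (hint _)]
    _ = ∫ s in Ioi t, f s := by
        rw [setIntegral_congr_fun measurableSet_Ioi hshift, setIntegral_Ioi_comp_add_right,
          zero_add]
    _ = Qinf x - ∫ s in (0:ℝ)..t, f s := by
        rw [hsplit, add_sub_cancel_left]

end Semigroup

theorem stmt3_general {X : Type*} [NormedAddCommGroup X] [InnerProductSpace ℝ X]
    [CompleteSpace X]
    (S : ℝ → X →L[ℝ] X) (hS0 : S 0 = 1)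
    (hSsem : ∀ t s : ℝ, 0 ≤ t → 0 ≤ s → S (t + s) = (S t).comp (S s))
    (hScont : ∀ x : X, Continuous fun t => S t x)
    (DA DAstar : Set X) (A Astar : X → X)
    (hA : ∀ x ∈ DA, HasDerivWithinAt (fun t => S t x) (A x) (Set.Ici 0) 0)
    (hAstar : ∀ x ∈ DAstar,
      HasDerivWithinAt (fun t => ContinuousLinearMap.adjoint (S t) x) (Astar x)
        (Set.Ici 0) 0)
    (Q : X →L[ℝ] X)
    (Qinf : X →L[ℝ] X)
    (hint : ∀ x : X, IntegrableOn
      (fun s => S s (Q (ContinuousLinearMap.adjoint (S s) x))) (Set.Ioi 0))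
    (hQinf : ∀ x : X, Qinf x
      = ∫ s in Set.Ioi (0:ℝ), S s (Q (ContinuousLinearMap.adjoint (S s) x)))
    (hmap : ∀ x ∈ DAstar, Qinf x ∈ DA) :
    ∀ x ∈ DAstar, Qinf (Astar x) + A (Qinf x) = -(Q x) := by
  intro x hx
  obtain ⟨C, hC⟩ := exists_eventually_opNorm_le_of_continuous_apply hScont 0
  replace hC : ∀ᶠ t in 𝓝[Ici 0] 0, ‖S t‖ ≤ C := hC.filter_mono nhdsWithin_le_nhds
  have hProduct : HasDerivWithinAt (fun t => S t (Qinf (adjoint (S t) x)))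
      (Qinf (Astar x) + A (Qinf x)) (Ici 0) 0 := by
    have := hasDerivWithinAt_apply_of_eventually_opNorm_le hC (hScont _).continuousWithinAt
      (Qinf.hasFDerivAt.comp_hasDerivWithinAt 0 (hAstar x hx))
      (by simpa [hS0, adjoint_one] using hA _ (hmap x hx))
    simpa [hS0, adjoint_one] using this
  have hIntegrand : ContinuousWithinAt (fun s => S s (Q (adjoint (S s) x))) (Ici 0) 0 :=
    tendsto_apply_of_eventually_opNorm_le hC
      (Q.continuous.continuousAt.comp_continuousWithinAt (hAstar x hx).continuousWithinAt)
      (hScont _).continuousWithinAt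
  have hIntegral : HasDerivWithinAt (fun t => S t (Qinf (adjoint (S t) x))) (-(Q x)) (Ici 0) 0 := by
    have hFTC := intervalIntegral.integral_hasDerivWithinAt_right (a := 0) (s := Ici 0)
      (t := Ioi 0) IntervalIntegrable.refl
      ⟨Ioi 0, self_mem_nhdsWithin, (hint x).aestronglyMeasurable⟩ (hIntegrand.mono Ioi_subset_Ici_self)
    simpa [hS0, adjoint_one] using (hFTC.const_sub (Qinf x)).congr
      (fun t ht => semigroup_conj_eq_sub_integral hSsem hint hQinf ht x)
      (semigroup_conj_eq_sub_integral hSsem hint hQinf le_rfl x)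
  exact (uniqueDiffWithinAt_Ici 0).eq_deriv _ hProduct hIntegral

/-- The operator `Q_∞ x = ∫_0^∞ e^{sA} Q e^{sA*} x ds` satisfies the Lyapunov
equation `Q_∞ A* x + A Q_∞ x = -Q x` on `D(A*)`. -/
theorem stmt3 {X : Type*} [NormedAddCommGroup X] [InnerProductSpace ℝ X]
    [CompleteSpace X] [TopologicalSpace.SeparableSpace X]
    (S : ℝ → X →L[ℝ] X) (hS0 : S 0 = 1)
    (hSsem : ∀ t s : ℝ, 0 ≤ t → 0 ≤ s → S (t + s) = (S t).comp (S s))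
    (hScont : ∀ x : X, Continuous fun t => S t x)
    (DA DAstar : Set X) (A Astar : X → X)
    (hA : ∀ x ∈ DA, HasDerivWithinAt (fun t => S t x) (A x) (Set.Ici 0) 0)
    (hAstar : ∀ x ∈ DAstar,
      HasDerivWithinAt (fun t => ContinuousLinearMap.adjoint (S t) x) (Astar x)
        (Set.Ici 0) 0)
    (Q : X →L[ℝ] X) (hQsa : IsSelfAdjoint Q) (hQpos : ∀ x : X, 0 ≤ ⟪Q x, x⟫)
    (Qinf : X →L[ℝ] X)
    (hint : ∀ x : X, IntegrableOn
      (fun s => S s (Q (ContinuousLinearMap.adjoint (S s) x))) (Set.Ioi 0))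
    (hQinf : ∀ x : X, Qinf x
      = ∫ s in Set.Ioi (0:ℝ), S s (Q (ContinuousLinearMap.adjoint (S s) x)))
    (hmap : ∀ x ∈ DAstar, Qinf x ∈ DA) :
    ∀ x ∈ DAstar, Qinf (Astar x) + A (Qinf x) = -(Q x) :=
  stmt3_general S hS0 hSsem hScont DA DAstar A Astar hA hAstar Q Qinf hint hQinf hmap
end
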